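/- Let P be a separative poset of cardinality at most ℵ₁. Then there is a dense subset D of P such that for every p ∈ P, the set {q ∈ D : p ≤ q} has cardinality at most ℵ₀. Consequently πNt(P) ≤ ℵ₁ ≤ S(P) when P is infinite. -/

import Mathlib

/-!
Fix an injection `f` of `P` into `ω₁`. The elements `d` whose `f`-value is least among the
elements below `d` are dense (take the `f`-least element below `p`), and any such `d` above `p`
has `f d ≤ f p`, leaving only countably many candidates.

For the Souslin number, an infinite separative poset has an infinite antichain. If infinitely
many minimal elements exist, they form one. If every element lies above one of finitely many
minimal elements, separativity makes `p` determined by the minimal elements below it, so `P` is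
finite. Otherwise, below an element lying above no minimal element, separativity splits every
`c` into `c' ≤ c` and `r ≤ c` incompatible with `c'`; iterating `c ↦ c'` produces a descending
chain whose companions `r` are pairwise incompatible.
-/

open Cardinal Set

universe u

section Compatibility

variable {P : Type*} [Preorder P]

def Compatible (p q : P) : Prop :=
  ∃ t, t ≤ p ∧ t ≤ q

variable (P) in
def IsSeparative : Prop :=
  ∀ p q : P, ¬ q ≤ p → ∃ r, r ≤ q ∧ ¬ Compatible r p

theorem Compatible.symm {p q : P} (h : Compatible p q) : Compatible q p :=
  let ⟨t, htp, htq⟩ := h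
  ⟨t, htq, htp⟩

theorem Compatible.mono {p p' q q' : P} (h : Compatible p q) (hp : p ≤ p') (hq : q ≤ q') :
    Compatible p' q' :=
  let ⟨t, htp, htq⟩ := h
  ⟨t, htp.trans hp, htq.trans hq⟩

variable (P) in
noncomputable def souslinNumber : Cardinal :=
  sInf {κ | ¬ ∃ A : Set P, IsAntichain Compatible A ∧ #A = κ}

end Compatibility

section DenseSubset

variable {P W : Type*} [Preorder P] [LinearOrder W]

def rankMinimal (f : P → W) : Set P :=
  {d | ∀ q ≤ d, f d ≤ f q}

theorem exists_mem_rankMinimal_le [WellFoundedLT W] (f : P → W) (p : P) :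
    ∃ q ∈ rankMinimal f, q ≤ p := by
  set q := Function.argminOn f (Iic p) ⟨p, le_rfl⟩
  have hqp : q ≤ p := Function.argminOn_mem f (Iic p) _
  exact ⟨q, fun q' hq' ↦ Function.argminOn_le f (Iic p) (hq'.trans hqp), hqp⟩

theorem countable_rankMinimal_ge {f : P → W} (hf : f.Injective)
    (hW : ∀ w : W, (Iic w).Countable) (p : P) :
    {q | q ∈ rankMinimal f ∧ p ≤ q}.Countable := by
  refine MapsTo.countable_of_injOn (f := f) ?_ hf.injOn (hW (f p))
  rintro q ⟨hq, hpq⟩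
  exact hq p hpq

end DenseSubset

theorem countable_Iic_toType_ord_aleph_one (w : (ℵ₁ : Cardinal.{u}).ord.ToType) :
    (Iic w).Countable := by
  rw [← Iio_insert, countable_insert, ← le_aleph0_iff_set_countable, ← lt_aleph_one_iff]
  simpa using mk_Iio_lt w (by simp)

theorem exists_dense_countable_ge_of_mk_le_aleph_one {P : Type u} [Preorder P]
    (hcard : #P ≤ ℵ₁) :
    ∃ D : Set P, (∀ p : P, ∃ q ∈ D, q ≤ p) ∧ ∀ p : P, {q | q ∈ D ∧ p ≤ q}.Countable := by
  rw [← card_ord ℵ₁, ← mk_toType, le_def] at hcard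
  obtain ⟨f⟩ := hcard
  exact ⟨rankMinimal f, exists_mem_rankMinimal_le f,
    countable_rankMinimal_ge f.injective countable_Iic_toType_ord_aleph_one⟩

section Separative

variable {P : Type*} [Preorder P]

theorem le_of_forall_isMin_le_imp (sep : IsSeparative P) (hmin : ∀ p : P, ∃ a, IsMin a ∧ a ≤ p)
    {p q : P} (h : ∀ a, IsMin a → a ≤ p → a ≤ q) : p ≤ q := by
  by_contra hpq
  obtain ⟨r, hrp, hrq⟩ := sep q p hpq
  obtain ⟨a, ha, har⟩ := hmin r
  exact hrq ⟨a, har, h a ha (har.trans hrp)⟩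

theorem exists_split_of_not_isMin (sep : IsSeparative P) {c : P} (hc : ¬ IsMin c) :
    ∃ c' r : P, c' ≤ c ∧ r ≤ c ∧ ¬ Compatible r c' := by
  obtain ⟨q, hqc⟩ := not_isMin_iff.mp hc
  obtain ⟨r, hrc, hrq⟩ := sep q c hqc.not_ge
  exact ⟨q, r, hqc.le, hrc, hrq⟩

theorem exists_infinite_antichain_of_forall_not_isMin_le (sep : IsSeparative P) {p : P}
    (hp : ∀ a, IsMin a → ¬ a ≤ p) : ∃ A : Set P, A.Infinite ∧ IsAntichain Compatible A := by
  have hsplit (c : Iic p) : ∃ c' r : P, c' ≤ c ∧ r ≤ c ∧ ¬ Compatible r c' :=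
    exists_split_of_not_isMin sep fun hc ↦ hp c hc c.2
  choose next companion next_le companion_le incompatible using hsplit
  let chain (n : ℕ) : Iic p :=
    (fun c : Iic p ↦ (⟨next c, (next_le c).trans c.2⟩ : Iic p))^[n] ⟨p, le_rfl⟩
  have chain_succ (n : ℕ) : (chain (n + 1) : P) = next (chain n) :=
    congrArg Subtype.val (Function.iterate_succ_apply' _ n _)
  have chain_anti : Antitone (fun n ↦ (chain n : P)) :=
    antitone_nat_of_succ_le fun n ↦ (chain_succ n).trans_le (next_le _)
  have hpair {i j : ℕ} (hij : i < j) :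
      ¬ Compatible (companion (chain i)) (companion (chain j)) := fun h ↦
    incompatible _ <| h.mono le_rfl <| (companion_le _).trans <|
      (chain_anti hij).trans (chain_succ i).le
  have hanti : Pairwise fun i j ↦ ¬ Compatible (companion (chain i)) (companion (chain j)) := by
    intro i j hij
    rcases hij.lt_or_gt with h | h
    · exact hpair h
    · exact fun hc ↦ hpair h hc.symm
  refine ⟨range fun n ↦ companion (chain n), infinite_range_of_injective ?_, ?_⟩
  · intro i j h
    by_contra hij
    exact hanti hij ⟨_, le_rfl, h.le⟩
  · rintro _ ⟨i, rfl⟩ _ ⟨j, rfl⟩ hne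
    exact hanti fun hij ↦ hne (hij ▸ rfl)

theorem le_souslinNumber {κ : Cardinal}
    (h : ∀ μ < κ, ∃ A : Set P, IsAntichain Compatible A ∧ #A = μ) : κ ≤ souslinNumber P := by
  refine le_csInf ⟨Order.succ #P, ?_⟩ fun μ hμ ↦ not_lt.mp fun hlt ↦ hμ (h μ hlt)
  rintro ⟨A, -, hA⟩
  exact (Order.lt_succ #P).not_ge (hA ▸ mk_set_le A)

end Separative

section Antichain

variable {P : Type*} [PartialOrder P]

theorem isAntichain_compatible_setOf_isMin : IsAntichain Compatible {a : P | IsMin a} := by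
  rintro a ha b hb hab ⟨t, hta, htb⟩
  exact hab (le_antisymm ((ha hta).trans htb) ((hb htb).trans hta))

theorem finite_of_finite_setOf_isMin (sep : IsSeparative P)
    (hmin : ∀ p : P, ∃ a, IsMin a ∧ a ≤ p) (hfin : {a : P | IsMin a}.Finite) : Finite P := by
  have := hfin.to_subtype
  refine Finite.of_injective (fun p : P ↦ {a : {a : P | IsMin a} | (a : P) ≤ p}) ?_
  intro p q hpq
  have hiff (a : P) (ha : IsMin a) : a ≤ p ↔ a ≤ q := Set.ext_iff.mp hpq ⟨a, ha⟩
  exact le_antisymm (le_of_forall_isMin_le_imp sep hmin fun a ha ↦ (hiff a ha).mp)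
    (le_of_forall_isMin_le_imp sep hmin fun a ha ↦ (hiff a ha).mpr)

theorem exists_infinite_antichain [Infinite P] (sep : IsSeparative P) :
    ∃ A : Set P, A.Infinite ∧ IsAntichain Compatible A := by
  by_cases hmin : ∀ p : P, ∃ a, IsMin a ∧ a ≤ p
  · refine ⟨_, fun hfin ↦ ?_, isAntichain_compatible_setOf_isMin⟩
    have := finite_of_finite_setOf_isMin sep hmin hfin
    exact not_finite P
  · push Not at hmin
    obtain ⟨p, hp⟩ := hmin
    exact exists_infinite_antichain_of_forall_not_isMin_le sep hp

theorem aleph_one_le_souslinNumber [Infinite P] (sep : IsSeparative P) :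
    ℵ₁ ≤ souslinNumber P := by
  obtain ⟨A, hinf, hA⟩ := exists_infinite_antichain sep
  refine le_souslinNumber fun μ hμ ↦ ?_
  obtain ⟨B, hBA, hB⟩ := le_mk_iff_exists_subset.mp
    ((lt_aleph_one_iff.mp hμ).trans (infinite_iff.mp hinf.to_subtype))
  exact ⟨B, hA.subset hBA, hB⟩

end Antichain

/-- A separative poset of cardinality ≤ ℵ₁ has a dense subset `D` such that
every `p` lies below at most countably many members of `D`; consequently
πNt(P) ≤ ℵ₁ ≤ S(P) when `P` is infinite. -/
theorem stmt_3 {P : Type*} [PartialOrder P]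
    (hcard : #P ≤ aleph 1)
    (sep : ∀ p q : P, ¬ q ≤ p → ∃ r, r ≤ q ∧ ¬ ∃ t : P, t ≤ r ∧ t ≤ p) :
    (∃ D : Set P, (∀ p : P, ∃ q ∈ D, q ≤ p) ∧
      ∀ p : P, #{q : P | q ∈ D ∧ p ≤ q} ≤ ℵ₀) ∧
    (Infinite P →
      aleph 1 ≤ sInf {κ : Cardinal |
        ¬ ∃ A : Set P, (∀ p ∈ A, ∀ q ∈ A, p ≠ q → ¬ ∃ t : P, t ≤ p ∧ t ≤ q) ∧ #A = κ}) := by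
  obtain ⟨D, hdense, hcount⟩ := exists_dense_countable_ge_of_mk_le_aleph_one hcard
  exact ⟨⟨D, hdense, fun p ↦ (hcount p).le_aleph0⟩,
    fun _ ↦ aleph_one_le_souslinNumber sep⟩
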